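/- Let k ≥ 2 be an integer and let A be a k-mixing F-algebra with dim A = d ≥ 2. Then l(A) ≤ 1 + (d − 1)(k − 1); in particular l(A) ≤ d(k − 1). -/

import Mathlib

/-!
Suppose `L_q(S) ⊆ L_t(S)` for all `q < t + k`. Then `L_c(S) ⊆ L_t(S)` for every `c`, by strong
induction on `c`: a word of length `c ≥ t + k` is a product `P Q`, and if, say,
`l(Q) ≤ l(P) ≤ t`, then `l(Q) ≥ k`, so `Q` is the value of a multilinear word in `k` subwords
of `Q`. Mixing writes `P Q` as a combination of values of words of `D_0` at `P` and these
subwords. Each such value either is a word shorter than `c`, or is a product `P' Q'` of length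
`c` in which the factor containing `P` is strictly longer than `P`, since `P` is not a factor of
the last multiplication. A factor longer than `t` lies in `L_t(S)` already, and then so does the
product, so an inner induction on `c - max (l(P), l(Q))` closes the argument.

Hence, as long as `L_t(S) ≠ A`, the dimension of `L_t(S)` grows within every `k - 1` steps, and
`dim L_1(S) ≥ 1`, so `L_{1 + (d - 1)(k - 1)}(S) = A`.
-/

namespace P

/-- The list of leaves (letters) of a nonassociative word, in order. -/
def leafList {α : Type*} : FreeMagma α → List α
  | .of a => [a]
  | .mul x y => leafList x ++ leafList y

/-- The length of a nonassociative word: the number of factors. -/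
def wlen {α : Type*} (w : FreeMagma α) : ℕ := (leafList w).length

/-- Evaluation of a formal word with letters in a magma `A`. -/
def evalA {A : Type*} [Mul A] (w : FreeMagma A) : A :=
  FreeMagma.lift (id : A → A) w

/-- Evaluation of a formal word in variables `Fin n` under an assignment `v`. -/
def evalVar {A : Type*} [Mul A] {n : ℕ} (v : Fin n → A) (w : FreeMagma (Fin n)) : A :=
  FreeMagma.lift v w

/-- `w` is a word in the set `S`: all its letters belong to `S`. -/
def HasLeavesIn {A : Type*} (S : Set A) (w : FreeMagma A) : Prop :=
  ∀ a ∈ leafList w, a ∈ S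

/-- `L_i(S)`: the span of all values of words in `S` of length at most `i`.
For `i = 0` this is `0`, since every word has length at least 1. -/
def Lspan (F : Type*) {A : Type*} [Field F] [NonUnitalNonAssocRing A] [Module F A]
    (S : Set A) (i : ℕ) : Submodule F A :=
  Submodule.span F { a | ∃ w : FreeMagma A, HasLeavesIn S w ∧ wlen w ≤ i ∧ evalA w = a }

/-- `S` is a generating set of the algebra `A`. -/
def Generates (F : Type*) {A : Type*} [Field F] [NonUnitalNonAssocRing A] [Module F A]
    (S : Set A) : Prop :=
  Submodule.span F { a | ∃ w : FreeMagma A, HasLeavesIn S w ∧ evalA w = a } = ⊤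

/-- The length `l(S)` of a generating set: the least `k` with `L_k(S) = A`. -/
noncomputable def lenS (F : Type*) {A : Type*} [Field F] [NonUnitalNonAssocRing A] [Module F A]
    (S : Set A) : ℕ :=
  sInf { k | Lspan F S k = ⊤ }

/-- The characteristic sequence of a generating set `S`, as a predicate on a
nondecreasing sequence `m : Fin d → ℕ`. -/
def IsCharSeq (F : Type*) {A : Type*} [Field F] [NonUnitalNonAssocRing A] [Module F A]
    (S : Set A) {d : ℕ} (m : Fin d → ℕ) : Prop :=
  Monotone m ∧ (∀ j, 1 ≤ m j) ∧
    ∀ t : ℕ, 1 ≤ t →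
      (Finset.univ.filter fun j => m j = t).card =
        Module.finrank F (Lspan F S t) - Module.finrank F (Lspan F S (t - 1))

/-- `w` is a multilinear word using each variable of `T` exactly once. -/
def IsMultilinearOn {n : ℕ} (T : Finset (Fin n)) (w : FreeMagma (Fin n)) : Prop :=
  (leafList w : Multiset (Fin n)) = T.val

/-- Membership in `D_0(z_0,…,z_k)`: multilinear words in `z_0,…,z_k` except those of
length `k+1` in which `z_0` is a factor of the last multiplication. -/
def InD0 {k : ℕ} (w : FreeMagma (Fin (k + 1))) : Prop :=
  (leafList w : Multiset (Fin (k + 1))).Nodup ∧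
    ¬∃ u : FreeMagma (Fin (k + 1)),
        IsMultilinearOn (Finset.univ.erase 0) u ∧
          (w = FreeMagma.of 0 * u ∨ w = u * FreeMagma.of 0)

/-- Membership in `D_l(z_0,…,z_k)`: multilinear words in `z_0,…,z_k` except those of
length `k+1` in which `z_0` occurs in the first factor of the last multiplication. -/
def InDl {k : ℕ} (w : FreeMagma (Fin (k + 1))) : Prop :=
  (leafList w : Multiset (Fin (k + 1))).Nodup ∧
    ¬((leafList w : Multiset (Fin (k + 1))) = (Finset.univ : Finset (Fin (k + 1))).val ∧
      ∃ w1 w2 : FreeMagma (Fin (k + 1)), w = w1 * w2 ∧ (0 : Fin (k + 1)) ∈ leafList w1)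

/-- Membership in `D_r(z_0,…,z_k)`: multilinear words in `z_0,…,z_k` except those of
length `k+1` in which `z_0` occurs in the second factor of the last multiplication. -/
def InDr {k : ℕ} (w : FreeMagma (Fin (k + 1))) : Prop :=
  (leafList w : Multiset (Fin (k + 1))).Nodup ∧
    ¬((leafList w : Multiset (Fin (k + 1))) = (Finset.univ : Finset (Fin (k + 1))).val ∧
      ∃ w1 w2 : FreeMagma (Fin (k + 1)), w = w1 * w2 ∧ (0 : Fin (k + 1)) ∈ leafList w2)

/-- The algebra `A` is `k`-mixing. -/
def IsKMixing (F A : Type*) [Field F] [NonUnitalNonAssocRing A] [Module F A] (k : ℕ) : Prop :=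
  ∀ (x : A) (y : Fin k → A) (w : FreeMagma (Fin (k + 1))),
    (∃ u, IsMultilinearOn (Finset.univ.erase 0) u ∧
        (w = FreeMagma.of 0 * u ∨ w = u * FreeMagma.of 0)) →
      evalVar (Fin.cons x y) w ∈
        Submodule.span F
          { a | ∃ z : FreeMagma (Fin (k + 1)), InD0 z ∧ evalVar (Fin.cons x y) z = a }

/-- The algebra `A` is `k`-sliding. -/
def IsKSliding (F A : Type*) [Field F] [NonUnitalNonAssocRing A] [Module F A] (k : ℕ) : Prop :=
  (∀ (x : A) (y : Fin k → A) (u : FreeMagma (Fin (k + 1))),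
      IsMultilinearOn (Finset.univ.erase 0) u →
        evalVar (Fin.cons x y) (u * FreeMagma.of 0) ∈
          Submodule.span F
            { a | ∃ z : FreeMagma (Fin (k + 1)), InDl z ∧ evalVar (Fin.cons x y) z = a }) ∨
  (∀ (x : A) (y : Fin k → A) (u : FreeMagma (Fin (k + 1))),
      IsMultilinearOn (Finset.univ.erase 0) u →
        evalVar (Fin.cons x y) (FreeMagma.of 0 * u) ∈
          Submodule.span F
            { a | ∃ z : FreeMagma (Fin (k + 1)), InDr z ∧ evalVar (Fin.cons x y) z = a })

/-- `u` is a subword of `w`. -/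
inductive IsSubword {A : Type*} : FreeMagma A → FreeMagma A → Prop
  | refl (w : FreeMagma A) : IsSubword w w
  | left {s u : FreeMagma A} (v : FreeMagma A) : IsSubword s u → IsSubword s (u * v)
  | right (u : FreeMagma A) {s v : FreeMagma A} : IsSubword s v → IsSubword s (u * v)

/-- `IsSprout w L`: `L` is a sprout sequence of the word `w` (with the convention that
words of length 1 have the empty sprout sequence). -/
inductive IsSprout {A : Type*} : FreeMagma A → List (FreeMagma A) → Prop
  | single (a : A) : IsSprout (FreeMagma.of a) []
  | cons_l {u v : FreeMagma A} {L : List (FreeMagma A)} :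
      wlen u ≤ wlen v → IsSprout v L → IsSprout (u * v) (u :: L)
  | cons_r {u v : FreeMagma A} {L : List (FreeMagma A)} :
      wlen v ≤ wlen u → IsSprout u L → IsSprout (u * v) (v :: L)

/-- A word is `k`-bounded if it has length 1 or admits an `l`-sprout sequence all of whose
terms are strictly less than `k`. -/
def KBounded {A : Type*} (k : ℕ) (w : FreeMagma A) : Prop :=
  ∃ L : List (FreeMagma A), IsSprout w L ∧ ∀ u ∈ L, wlen u < k

/-- A word `w` in `S` is irreducible if it does not lie in `L_m(S)` for any `m < l(w)`. -/
def Irred (F : Type*) {A : Type*} [Field F] [NonUnitalNonAssocRing A] [Module F A]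
    (S : Set A) (w : FreeMagma A) : Prop :=
  ∀ m : ℕ, m < wlen w → evalA w ∉ Lspan F S m

/-- The step function of a word: the least `t` such that `w` has a subword of
length `l(w) - 2t - 1`. -/
noncomputable def stepFn {A : Type*} (w : FreeMagma A) : ℕ :=
  sInf { t : ℕ | ∃ u : FreeMagma A, IsSubword u w ∧ wlen u + 2 * t + 1 = wlen w }

/-- `w` is a `p`-step word for the generating set `S`. -/
def IsPStepWord (F : Type*) {A : Type*} [Field F] [NonUnitalNonAssocRing A] [Module F A]
    (S : Set A) (w : FreeMagma A) (p : ℕ) : Prop :=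
  HasLeavesIn S w ∧ Irred F S w ∧ KBounded 3 w ∧ stepFn w = p ∧
    ∀ v : FreeMagma A, HasLeavesIn S v → Irred F S v → KBounded 3 v → wlen v = wlen w →
      p ≤ stepFn v

/-- `A` is `k`-round: `x · v = 0` for every product `v` of `k` elements. -/
def IsKRound (A : Type*) [NonUnitalNonAssocRing A] (k : ℕ) : Prop :=
  ∀ (x : A) (w : FreeMagma A), wlen w = k → x * evalA w = 0

/-- `A` is `k`-based. -/
def IsKBased (A : Type*) [NonUnitalNonAssocRing A] (k : ℕ) : Prop :=
  ∀ (x : A) (u v : FreeMagma A), wlen u + wlen v = k →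
    x * (evalA u * evalA v) = evalA u * (x * evalA v) ∧
      (evalA u * evalA v) * x = (evalA u * x) * evalA v

/-- The set `P(x,y,z)`. -/
def Pset {A : Type*} [Mul A] (x y z : A) : Set A :=
  {(x*z)*y, (z*x)*y, (y*z)*x, (z*y)*x, x*(z*y), x*(y*z), y*(x*z), y*(z*x),
    x*y, y*x, x*z, z*x, y*z, z*y, x, y, z}

/-- The set `Q_l(x,y,z)`. -/
def Qlset {A : Type*} [Mul A] (x y z : A) : Set A :=
  {x*(z*y), x*(y*z), y*(x*z), y*(z*x), x*y, y*x, x*z, z*x, y*z, z*y, x, y, z}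

/-- The set `Q_r(x,y,z)`. -/
def Qrset {A : Type*} [Mul A] (x y z : A) : Set A :=
  {(x*z)*y, (z*x)*y, (y*z)*x, (z*y)*x, x*y, y*x, x*z, z*x, y*z, z*y, x, y, z}

/-- `A` is a mixing algebra. -/
def IsMixingAlg (F A : Type*) [Field F] [NonUnitalNonAssocRing A] [Module F A] : Prop :=
  ∀ x y z : A, (x*y)*z ∈ Submodule.span F (Pset x y z) ∧
    z*(x*y) ∈ Submodule.span F (Pset x y z)

/-- `A` is a sliding algebra. -/
def IsSlidingAlg (F A : Type*) [Field F] [NonUnitalNonAssocRing A] [Module F A] : Prop :=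
  (∀ x y z : A, z*(x*y) ∈ Submodule.span F (Qrset x y z)) ∨
  (∀ x y z : A, (x*y)*z ∈ Submodule.span F (Qlset x y z))

section Words

variable {α ι : Type*}

@[simp] lemma leafList_of (a : α) : leafList (FreeMagma.of a) = [a] := rfl

@[simp] lemma leafList_mul (u v : FreeMagma α) :
    leafList (u * v) = leafList u ++ leafList v := rfl

@[simp] lemma wlen_of (a : α) : wlen (FreeMagma.of a) = 1 := rfl

@[simp] lemma wlen_mul (u v : FreeMagma α) : wlen (u * v) = wlen u + wlen v := by
  simp [wlen]

lemma wlen_pos (w : FreeMagma α) : 0 < wlen w := by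
  induction w with
  | ih1 a => simp
  | ih2 u v _ _ => rw [wlen_mul]; omega

lemma HasLeavesIn.mul {S : Set α} {u v : FreeMagma α} (hu : HasLeavesIn S u)
    (hv : HasLeavesIn S v) : HasLeavesIn S (u * v) := by
  intro a ha
  rcases List.mem_append.mp ha with h | h
  exacts [hu a h, hv a h]

lemma HasLeavesIn.of_mul_left {S : Set α} {u v : FreeMagma α} (h : HasLeavesIn S (u * v)) :
    HasLeavesIn S u := fun a ha => h a (List.mem_append_left _ ha)

lemma HasLeavesIn.of_mul_right {S : Set α} {u v : FreeMagma α} (h : HasLeavesIn S (u * v)) :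
    HasLeavesIn S v := fun a ha => h a (List.mem_append_right _ ha)

lemma lift_congr {M : Type*} [Mul M] {f g : ι → M} {w : FreeMagma ι}
    (h : ∀ i ∈ leafList w, f i = g i) : FreeMagma.lift f w = FreeMagma.lift g w := by
  induction w with
  | ih1 a => simpa using h a (by simp)
  | ih2 u v ihu ihv =>
    rw [map_mul, map_mul,
      ihu fun i hi => h i (by simp [hi]), ihv fun i hi => h i (by simp [hi])]

lemma leafList_lift (σ : ι → FreeMagma α) (w : FreeMagma ι) :
    leafList (FreeMagma.lift σ w) = (leafList w).flatMap fun i => leafList (σ i) := by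
  induction w with
  | ih1 a => simp
  | ih2 u v ihu ihv =>
    rw [map_mul, leafList_mul, ihu, ihv, leafList_mul, List.flatMap_append]

lemma wlen_lift (σ : ι → FreeMagma α) (w : FreeMagma ι) :
    wlen (FreeMagma.lift σ w) = ((leafList w).map fun i => wlen (σ i)).sum := by
  rw [wlen, leafList_lift, List.length_flatMap]
  rfl

lemma HasLeavesIn.lift {S : Set α} {σ : ι → FreeMagma α} (hσ : ∀ i, HasLeavesIn S (σ i))
    (w : FreeMagma ι) : HasLeavesIn S (FreeMagma.lift σ w) := by
  intro a ha
  rw [leafList_lift] at ha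
  obtain ⟨i, -, hai⟩ := List.mem_flatMap.mp ha
  exact hσ i a hai

lemma wlen_le_wlen_lift (σ : ι → FreeMagma α) {w : FreeMagma ι} {i : ι}
    (hi : i ∈ leafList w) : wlen (σ i) ≤ wlen (FreeMagma.lift σ w) := by
  rw [wlen_lift]
  exact List.le_sum_of_mem (List.mem_map_of_mem hi)

lemma wlen_lt_wlen_lift (σ : ι → FreeMagma α) {w : FreeMagma ι} {i : ι}
    (hi : i ∈ leafList w) (hw : w ≠ FreeMagma.of i) :
    wlen (σ i) < wlen (FreeMagma.lift σ w) := by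
  cases w with
  | of j => simp_all
  | mul u v =>
    rw [FreeMagma.mul_eq, map_mul, wlen_mul]
    rcases List.mem_append.mp hi with h | h
    · have := wlen_le_wlen_lift σ h
      have := wlen_pos (FreeMagma.lift σ v)
      omega
    · have := wlen_le_wlen_lift σ h
      have := wlen_pos (FreeMagma.lift σ u)
      omega

section Fintype

variable [Fintype ι]

lemma wlen_lift_eq_sum (σ : ι → FreeMagma α) {w : FreeMagma ι}
    (hw : (leafList w : Multiset ι) = Finset.univ.val) :
    wlen (FreeMagma.lift σ w) = ∑ i, wlen (σ i) := by
  rw [wlen_lift, Finset.sum_eq_multiset_sum, ← hw]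
  rfl

lemma wlen_lift_lt_sum [DecidableEq ι] (σ : ι → FreeMagma α) {w : FreeMagma ι}
    (hnd : (leafList w).Nodup) (hw : (leafList w : Multiset ι) ≠ Finset.univ.val) :
    wlen (FreeMagma.lift σ w) < ∑ i, wlen (σ i) := by
  obtain ⟨i, hi⟩ : ∃ i, i ∉ leafList w := by
    by_contra! h
    have hfull : (leafList w).toFinset = Finset.univ :=
      Finset.eq_univ_of_forall fun i => List.mem_toFinset.mpr (h i)
    rw [← List.toFinset_eq hnd] at hfull
    exact hw (congrArg Finset.val hfull)
  rw [wlen_lift, ← List.sum_toFinset _ hnd]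
  exact Finset.sum_lt_sum_of_subset (Finset.subset_univ _) (Finset.mem_univ i)
    (by simpa using hi) (wlen_pos _) fun _ _ _ => Nat.zero_le _

end Fintype

lemma isMultilinearOn_erase {n : ℕ} {T : Finset (Fin n)} {a : Fin n}
    {w u : FreeMagma (Fin n)} (hw : (leafList w : Multiset (Fin n)) = T.val)
    (hwu : (leafList w : Multiset (Fin n)) = a ::ₘ leafList u) :
    IsMultilinearOn (T.erase a) u := by
  rw [IsMultilinearOn, Finset.erase_val, ← hw, hwu, Multiset.erase_cons_head]

lemma exists_lift_eq_of_card_le [DecidableEq ι] {S : Set α} {Q : FreeMagma α}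
    (hQ : HasLeavesIn S Q) {s : Finset ι} (hs : s.Nonempty) (hsQ : s.card ≤ wlen Q) :
    ∃ (u : FreeMagma ι) (σ : ι → FreeMagma α), (leafList u : Multiset ι) = s.val ∧
      FreeMagma.lift σ u = Q ∧ ∀ i, HasLeavesIn S (σ i) := by
  induction Q generalizing s with
  | ih1 b =>
    obtain ⟨i, rfl⟩ := Finset.card_eq_one.mp (le_antisymm hsQ hs.card_pos)
    exact ⟨FreeMagma.of i, fun _ => FreeMagma.of b, rfl, rfl, fun _ => hQ⟩
  | ih2 Q₁ Q₂ ih₁ ih₂ =>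
    obtain ⟨i, rfl⟩ | hs2 : (∃ i, s = {i}) ∨ 2 ≤ s.card := by
      rw [← Finset.card_eq_one]; have := hs.card_pos; omega
    · exact ⟨FreeMagma.of i, fun _ => Q₁ * Q₂, rfl, rfl, fun _ => hQ⟩
    rw [wlen_mul] at hsQ
    have := wlen_pos Q₁
    have := wlen_pos Q₂
    obtain ⟨s₁, hs₁, hcard₁⟩ :=
      Finset.exists_subset_card_eq (s := s) (n := min (wlen Q₁) (s.card - 1)) (by omega)
    have hcard₂ : (s \ s₁).card = s.card - s₁.card := Finset.card_sdiff_of_subset hs₁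
    obtain ⟨u₁, σ₁, hu₁, hσ₁, hσ₁S⟩ :=
      ih₁ (s := s₁) hQ.of_mul_left (Finset.card_pos.mp (by omega)) (by omega)
    obtain ⟨u₂, σ₂, hu₂, hσ₂, hσ₂S⟩ :=
      ih₂ (s := s \ s₁) hQ.of_mul_right (Finset.card_pos.mp (by omega)) (by omega)
    refine ⟨u₁ * u₂, s₁.piecewise σ₁ σ₂, ?_, ?_, fun i => ?_⟩
    · rw [leafList_mul, ← Multiset.coe_add, hu₁, hu₂, Finset.sdiff_val,
        add_tsub_cancel_of_le (Finset.val_le_iff.mpr hs₁)]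
    · rw [map_mul, ← hσ₁, ← hσ₂]
      congr 1 <;> refine lift_congr fun i hi => ?_
      · exact s₁.piecewise_eq_of_mem _ _ (by rw [← Finset.mem_val, ← hu₁]; exact hi)
      · have : i ∈ s \ s₁ := by rw [← Finset.mem_val, ← hu₂]; exact hi
        exact s₁.piecewise_eq_of_notMem _ _ (Finset.mem_sdiff.mp this).2
    · by_cases hi : i ∈ s₁
      · rw [s₁.piecewise_eq_of_mem _ _ hi]; exact hσ₁S i
      · rw [s₁.piecewise_eq_of_notMem _ _ hi]; exact hσ₂S i

end Words

@[simp] lemma evalA_mul {A : Type*} [Mul A] (u v : FreeMagma A) :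
    evalA (u * v) = evalA u * evalA v :=
  map_mul (FreeMagma.lift id) u v

lemma evalA_lift {ι A : Type*} [Mul A] (σ : ι → FreeMagma A) (w : FreeMagma ι) :
    evalA (FreeMagma.lift σ w) = FreeMagma.lift (fun i => evalA (σ i)) w := by
  induction w with
  | ih1 a => simp
  | ih2 u v ihu ihv => rw [map_mul, map_mul, evalA_mul, ihu, ihv]

section Lspan

variable {F A : Type*} [Field F] [NonUnitalNonAssocRing A] [Module F A] {S : Set A}

lemma evalA_mem_Lspan {w : FreeMagma A} (hw : HasLeavesIn S w) {i : ℕ} (hi : wlen w ≤ i) :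
    evalA w ∈ Lspan F S i :=
  Submodule.subset_span ⟨w, hw, hi, rfl⟩

lemma Lspan_mono : Monotone (Lspan F S) :=
  fun _ _ hij => Submodule.span_mono fun _ ⟨w, hw, hl, he⟩ => ⟨w, hw, hl.trans hij, he⟩

lemma mul_mem_Lspan [SMulCommClass F A A] [IsScalarTower F A A] {a b : A} {i j : ℕ}
    (ha : a ∈ Lspan F S i) (hb : b ∈ Lspan F S j) : a * b ∈ Lspan F S (i + j) := by
  have h := Submodule.apply_mem_map₂ (LinearMap.mul F A) ha hb
  rw [Lspan, Lspan, Submodule.map₂_span_span] at h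
  refine Submodule.span_le.mpr ?_ h
  rintro _ ⟨_, ⟨u, hu, hui, rfl⟩, _, ⟨v, hv, hvj, rfl⟩, rfl⟩
  change evalA u * evalA v ∈ Lspan F S (i + j)
  rw [← evalA_mul]
  exact evalA_mem_Lspan (hu.mul hv) (by rw [wlen_mul]; omega)

lemma Lspan_one_ne_bot [Nontrivial A] (hS : Generates F S) : Lspan F S 1 ≠ ⊥ := by
  intro h
  have hzero : ∀ w : FreeMagma A, HasLeavesIn S w → evalA w = 0 := by
    intro w hw
    induction w with
    | ih1 a => exact (Submodule.mem_bot F).mp (h ▸ evalA_mem_Lspan hw le_rfl)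
    | ih2 u v ihu _ => rw [evalA_mul, ihu hw.of_mul_left, zero_mul]
  refine bot_ne_top (eq_top_iff.mpr (hS ▸ Submodule.span_le.mpr ?_))
  rintro _ ⟨w, hw, rfl⟩
  rw [SetLike.mem_coe, hzero w hw]
  exact zero_mem _

lemma Lspan_eq_top_of_forall_le (hS : Generates F S) {t : ℕ}
    (h : ∀ c, Lspan F S c ≤ Lspan F S t) : Lspan F S t = ⊤ := by
  refine eq_top_iff.mpr (hS ▸ Submodule.span_le.mpr ?_)
  rintro _ ⟨w, hw, rfl⟩
  exact h _ (evalA_mem_Lspan hw le_rfl)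

end Lspan

lemma IsKMixing.lift_mem_span {F A : Type*} [Field F] [NonUnitalNonAssocRing A] [Module F A]
    {k : ℕ} (hmix : IsKMixing F A k) (v : Fin (k + 1) → A) {u w : FreeMagma (Fin (k + 1))}
    (hu : IsMultilinearOn (Finset.univ.erase 0) u)
    (hw : w = FreeMagma.of 0 * u ∨ w = u * FreeMagma.of 0) :
    FreeMagma.lift v w ∈
      Submodule.span F {a | ∃ z, InD0 z ∧ FreeMagma.lift v z = a} := by
  simpa only [evalVar, Fin.cons_self_tail] using hmix (v 0) (Fin.tail v) w ⟨u, hu, hw⟩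

lemma Submodule.eq_top_of_forall_eq_top_or_lt {K V : Type*} [DivisionRing K] [AddCommGroup V]
    [Module K V] [FiniteDimensional K V] {f : ℕ → Submodule K V} (hf : Monotone f)
    (h0 : f 0 ≠ ⊥) (hstep : ∀ i, f i = ⊤ ∨ f i < f (i + 1)) :
    f (Module.finrank K V - 1) = ⊤ := by
  have hgrow : ∀ i, f i = ⊤ ∨ i + 1 ≤ Module.finrank K (f i) := by
    intro i
    induction i with
    | zero => exact .inr (Submodule.one_le_finrank_iff.mpr h0)
    | succ i ih =>
      rcases hstep i with htop | hlt
      · exact .inl (top_le_iff.mp (htop ▸ hf i.le_succ))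
      · rcases ih with htop | hrank
        · exact absurd (htop ▸ hlt) not_top_lt
        · have := Submodule.finrank_lt_finrank_of_lt hlt
          omega
  rcases hgrow (Module.finrank K V - 1) with htop | hrank
  · exact htop
  · exact Submodule.eq_top_of_finrank_eq
      (le_antisymm (Submodule.finrank_le _) (by omega))

section Plateau

variable {F A : Type*} [Field F] [NonUnitalNonAssocRing A] [Module F A] {S : Set A} {k t c : ℕ}
  (hprev : ∀ q < c, Lspan F S q ≤ Lspan F S t)
include hprev

lemma evalA_mem_of_wlen_lt {w : FreeMagma A} (hw : HasLeavesIn S w) (hwc : wlen w < c) :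
    evalA w ∈ Lspan F S t :=
  hprev _ hwc (evalA_mem_Lspan hw le_rfl)

lemma mul_mem_of_lt_max [SMulCommClass F A A] [IsScalarTower F A A] {P Q : FreeMagma A}
    (hP : HasLeavesIn S P) (hQ : HasLeavesIn S Q)
    (hc : wlen P + wlen Q = c) (hlong : t < max (wlen P) (wlen Q)) :
    evalA P * evalA Q ∈ Lspan F S t := by
  have := wlen_pos P
  have := wlen_pos Q
  rcases lt_max_iff.mp hlong with h | h
  · exact hprev (t + wlen Q) (by omega)
      (mul_mem_Lspan (evalA_mem_of_wlen_lt hprev hP (by omega)) (evalA_mem_Lspan hQ le_rfl))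
  · exact hprev (wlen P + t) (by omega)
      (mul_mem_Lspan (evalA_mem_Lspan hP le_rfl) (evalA_mem_of_wlen_lt hprev hQ (by omega)))

lemma evalA_lift_mem_of_inD0 (hk : 1 ≤ k) {B : Fin (k + 1) → FreeMagma A}
    (hB : ∀ i, HasLeavesIn S (B i)) (hc : ∑ i, wlen (B i) = c)
    (hlonger : ∀ P Q, HasLeavesIn S P → HasLeavesIn S Q → wlen P + wlen Q = c →
      wlen (B 0) < max (wlen P) (wlen Q) → evalA P * evalA Q ∈ Lspan F S t)
    {z : FreeMagma (Fin (k + 1))} (hz : InD0 z) : evalA (FreeMagma.lift B z) ∈ Lspan F S t := by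
  obtain ⟨hnd, hnot⟩ := hz
  by_cases hfull : (leafList z : Multiset (Fin (k + 1))) = Finset.univ.val
  swap
  · exact evalA_mem_of_wlen_lt hprev (HasLeavesIn.lift hB z) (hc ▸ wlen_lift_lt_sum B hnd hfull)
  have hsum := wlen_lift_eq_sum B hfull
  cases z with
  | of i =>
    have := congrArg Multiset.card hfull
    simp only [leafList_of, Multiset.coe_singleton, Multiset.card_singleton, Finset.card_val,
      Finset.card_univ, Fintype.card_fin] at this
    omega
  | mul z₁ z₂ =>
    rw [FreeMagma.mul_eq] at hfull hnot hsum ⊢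
    rw [map_mul, wlen_mul] at hsum
    rw [map_mul, evalA_mul]
    refine hlonger _ _ (HasLeavesIn.lift hB z₁) (HasLeavesIn.lift hB z₂) (hsum.trans hc) ?_
    have h0 : (0 : Fin (k + 1)) ∈ leafList z₁ ++ leafList z₂ := by
      rw [← leafList_mul, ← Multiset.mem_coe, hfull]
      exact Finset.mem_univ_val 0
    rcases List.mem_append.mp h0 with h0 | h0
    · have hne : z₁ ≠ FreeMagma.of 0 := by
        rintro rfl
        exact hnot ⟨z₂, isMultilinearOn_erase hfull rfl, .inl rfl⟩
      exact lt_max_of_lt_left (wlen_lt_wlen_lift B h0 hne)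
    · have hne : z₂ ≠ FreeMagma.of 0 := by
        rintro rfl
        refine hnot ⟨z₁, isMultilinearOn_erase hfull ?_, .inr rfl⟩
        exact Multiset.coe_eq_coe.mpr (List.perm_append_singleton _ _)
      exact lt_max_of_lt_right (wlen_lt_wlen_lift B h0 hne)

lemma mul_mem_and_mul_mem_of_mixing (hk : 1 ≤ k) (hmix : IsKMixing F A k)
    {X Y : FreeMagma A} (hX : HasLeavesIn S X) (hY : HasLeavesIn S Y)
    (hc : wlen X + wlen Y = c) (hkY : k ≤ wlen Y)
    (hlonger : ∀ P Q, HasLeavesIn S P → HasLeavesIn S Q → wlen P + wlen Q = c →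
      wlen X < max (wlen P) (wlen Q) → evalA P * evalA Q ∈ Lspan F S t) :
    evalA X * evalA Y ∈ Lspan F S t ∧ evalA Y * evalA X ∈ Lspan F S t := by
  obtain ⟨u, σ, hu, hσ, hσS⟩ := exists_lift_eq_of_card_le hY
    (s := Finset.univ.erase (0 : Fin (k + 1)))
    ⟨1, Finset.mem_erase.mpr ⟨Fin.one_eq_zero_iff.not.mpr (by omega), Finset.mem_univ _⟩⟩
    (by simpa using hkY)
  set B := Function.update σ 0 X
  have hB : ∀ i, HasLeavesIn S (B i) := by
    intro i
    by_cases hi : i = 0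
    · subst hi; simpa [B] using hX
    · simpa [B, hi] using hσS i
  have hBu : FreeMagma.lift B u = Y := by
    refine hσ ▸ lift_congr fun i hi => Function.update_of_ne ?_ _ _
    have : i ∈ (Finset.univ.erase (0 : Fin (k + 1))).val := hu ▸ hi
    exact Finset.ne_of_mem_erase (Finset.mem_val.mp this)
  have hfull : (leafList (FreeMagma.of 0 * u) : Multiset (Fin (k + 1))) = Finset.univ.val := by
    rw [leafList_mul, leafList_of, List.singleton_append, ← Multiset.cons_coe, hu,
      Finset.erase_val, Multiset.cons_erase (Finset.mem_univ_val 0)]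
  have hBc : ∑ i, wlen (B i) = c := by
    rw [← wlen_lift_eq_sum B hfull, map_mul, wlen_mul, hBu, FreeMagma.lift_of]
    simpa [B] using hc
  have hmem : ∀ w, (w = FreeMagma.of 0 * u ∨ w = u * FreeMagma.of 0) →
      evalA (FreeMagma.lift B w) ∈ Lspan F S t := by
    intro w hw
    rw [evalA_lift]
    refine Submodule.span_le.mpr ?_ (hmix.lift_mem_span _ hu hw)
    rintro _ ⟨z, hz, rfl⟩
    rw [SetLike.mem_coe, ← evalA_lift]
    exact evalA_lift_mem_of_inD0 hprev hk hB hBc (by simpa [B] using hlonger) hz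
  constructor
  · simpa [hBu, B] using hmem _ (.inl rfl)
  · simpa [hBu, B] using hmem _ (.inr rfl)

lemma mul_mem_Lspan_of_forall_lt [SMulCommClass F A A] [IsScalarTower F A A] (hk : 1 ≤ k)
    (hmix : IsKMixing F A k) (hck : t + k ≤ c)
    {P Q : FreeMagma A} (hP : HasLeavesIn S P) (hQ : HasLeavesIn S Q)
    (hc : wlen P + wlen Q = c) : evalA P * evalA Q ∈ Lspan F S t := by
  induction hn : c - max (wlen P) (wlen Q) using Nat.strong_induction_on generalizing P Q with
  | _ n ih =>
  by_cases hlong : t < max (wlen P) (wlen Q)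
  · exact mul_mem_of_lt_max hprev hP hQ hc hlong
  have hlonger : ∀ P' Q', HasLeavesIn S P' → HasLeavesIn S Q' → wlen P' + wlen Q' = c →
      max (wlen P) (wlen Q) < max (wlen P') (wlen Q') → evalA P' * evalA Q' ∈ Lspan F S t :=
    fun P' Q' hP' hQ' hc' hlt => ih _ (by omega) hP' hQ' hc' rfl
  rcases le_total (wlen Q) (wlen P) with hle | hle
  · exact (mul_mem_and_mul_mem_of_mixing hprev hk hmix hP hQ hc (by omega)
      (by simpa [max_eq_left hle] using hlonger)).1
  · exact (mul_mem_and_mul_mem_of_mixing hprev hk hmix hQ hP (by omega) (by omega)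
      (by simpa [max_eq_right hle] using hlonger)).2

end Plateau

section Stabilization

variable {F A : Type*} [Field F] [NonUnitalNonAssocRing A] [Module F A]
  [SMulCommClass F A A] [IsScalarTower F A A] {S : Set A} {k : ℕ}

lemma Lspan_le_of_plateau (hk : 2 ≤ k) (hmix : IsKMixing F A k) {t : ℕ}
    (hplateau : ∀ q < t + k, Lspan F S q ≤ Lspan F S t) (c : ℕ) :
    Lspan F S c ≤ Lspan F S t := by
  induction c using Nat.strong_induction_on with
  | _ c ih =>
  by_cases hc : c < t + k
  · exact hplateau c hc
  refine Submodule.span_le.mpr ?_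
  rintro _ ⟨w, hw, hwc, rfl⟩
  rcases hwc.lt_or_eq with hwc | hwc
  · exact evalA_mem_of_wlen_lt ih hw hwc
  cases w with
  | of a => rw [wlen_of] at hwc; omega
  | mul P Q =>
    rw [FreeMagma.mul_eq, wlen_mul] at hwc
    rw [FreeMagma.mul_eq, evalA_mul]
    exact mul_mem_Lspan_of_forall_lt ih (by omega) hmix (by omega) hw.of_mul_left
      hw.of_mul_right hwc

lemma Lspan_eq_top_or_lt (hk : 2 ≤ k) (hmix : IsKMixing F A k) (hS : Generates F S) (t : ℕ) :
    Lspan F S t = ⊤ ∨ Lspan F S t < Lspan F S (t + (k - 1)) := by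
  by_cases h : Lspan F S (t + (k - 1)) ≤ Lspan F S t
  · refine .inl (Lspan_eq_top_of_forall_le hS (Lspan_le_of_plateau hk hmix fun q hq => ?_))
    exact (Lspan_mono (by omega)).trans h
  · exact .inr (lt_of_le_not_ge (Lspan_mono (by omega)) h)

end Stabilization

section Statement
variable {F A : Type*} [Field F] [NonUnitalNonAssocRing A] [Module F A]
  [SMulCommClass F A A] [IsScalarTower F A A]

theorem stmt2 [FiniteDimensional F A] (k : ℕ) (hk : 2 ≤ k) (hmix : IsKMixing F A k)
    (d : ℕ) (hd : Module.finrank F A = d) (hd2 : 2 ≤ d) :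
    ∀ S : Set A, S.Finite → Generates F S →
      lenS F S ≤ 1 + (d - 1) * (k - 1) ∧ lenS F S ≤ d * (k - 1) := by
  intro S _ hS
  have : Nontrivial A := Module.nontrivial_of_finrank_pos (R := F) (by omega)
  have htop : Lspan F S (1 + (d - 1) * (k - 1)) = ⊤ := by
    subst hd
    refine Submodule.eq_top_of_forall_eq_top_or_lt (f := fun i => Lspan F S (1 + i * (k - 1)))
      (fun i j hij => Lspan_mono (by gcongr)) (by simpa using Lspan_one_ne_bot hS) fun i => ?_
    simpa [add_one_mul, add_assoc] using Lspan_eq_top_or_lt hk hmix hS (1 + i * (k - 1))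
  have hlen : lenS F S ≤ 1 + (d - 1) * (k - 1) := Nat.sInf_le htop
  refine ⟨hlen, hlen.trans ?_⟩
  calc 1 + (d - 1) * (k - 1) ≤ (d - 1) * (k - 1) + (k - 1) := by omega
    _ = d * (k - 1) := by rw [← add_one_mul, Nat.sub_add_cancel (by omega)]

end Statement

end P
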